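/- Fix an injective enumeration ⟨qₙ : n < ω⟩ of ℚ and functions cd : ω^ω → 𝔓(ℚ) and dcd : 𝔓(ℚ) → ω^ω with cd ∘ dcd = id. Define the operations on ω^ω: F_c(h) = dcd(ℚ ∖ cd(h)); F_m(h) = dcd(M(cd(h))), where M(X) is the maximal crowded subset of X; F_f(h) = f_{cd(h)}, where f_X is constantly zero unless X is crowded and unbounded above, in which case it is the fast-enough-growing function of X; F_s(g,h) = dcd(shr(cd(g), h)); and F_i(g,h) = dcd(cd(g) ∩ cd(h)). Let ℱ_{gruff} = {F_c, F_m, F_f, F_s, F_i}. If κ is a regular cardinal and there exists a ⟨𝔡, ℱ_{gruff}, κ⟩-pathway, then there exists a gruff ultrafilter. -/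

import Mathlib

/-!
Zorn's lemma is applied to *stages*: ultrafilters `U` of the Boolean algebra `cd[B_ℓ]` coded by a
level of the pathway, all of whose members `X` have an unbounded maximal crowded part `M(X)`.

Given a stage, choose `f` witnessing that `B_ℓ` is not dominating and a monotone `F ≥ id` with
`g(n+1) < F(n)` infinitely often for every `g ∈ B_ℓ`. For `Z ∈ U` the set `M(Z)` is crowded and
unbounded and `f_{M(Z)} ∈ B_ℓ`, so `F` escapes `f_{M(Z)}`, which makes `shr(M(Z), F) ⊆ Z` closed,
crowded and unbounded. Coded at a later level, these sets generate a filter avoiding the ideal of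
sets with bounded maximal crowded part (if `M(A ∪ B)` is unbounded, so is `M(A)` or `M(B)`), and an
ultrafilter extending it is a new stage in which every member of `U` contains a perfect member.

Unions of chains of stages are stages as long as their levels stay below `δ`, by continuity of the
pathway, so some chain has levels cofinal in `δ`. As the pathway covers `ω^ω`, the union of that
chain is an ultrafilter on all of `𝒫(ℚ)`, and it is gruff.
-/

open Cardinal Set

/-- A subset `S` is closed under a finitary operation `F` (presented as a pair of an
arity `n` and a function `(Fin n → B) → B`). -/
def ClosedUnderOp {B : Type*} (S : Set B) (F : Σ n : ℕ, (Fin n → B) → B) : Prop :=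
  ∀ v : Fin F.1 → B, (∀ i, v i ∈ S) → F.2 v ∈ S

/-- `IsPathway E 𝓕 δ seq` says that `⟨seq α : α < δ⟩` is a
`⟨⟨A,B,E⟩, 𝓕, δ⟩`-pathway: an increasing continuous sequence of subsets of `B`
whose union is all of `B`, such that no `seq α` is `E`-dominating, and with each
`seq α` closed under every operation in `𝓕`. -/
structure IsPathway {A B : Type*} (E : A → B → Prop)
    (𝓕 : Set (Σ n : ℕ, (Fin n → B) → B)) (δ : Ordinal)
    (seq : Ordinal → Set B) : Prop where
  mono : ∀ α β : Ordinal, α ≤ β → β < δ → seq α ⊆ seq β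
  cont : ∀ γ : Ordinal, γ < δ → Order.IsSuccLimit γ → seq γ = ⋃ α : Ordinal, ⋃ _ : α < γ, seq α
  total : (⋃ α : Ordinal, ⋃ _ : α < δ, seq α) = Set.univ
  avoid : ∀ α : Ordinal, α < δ → ∃ x : A, ∀ y ∈ seq α, ¬ E x y
  closedF : ∀ α : Ordinal, α < δ → ∀ F ∈ 𝓕, ClosedUnderOp (seq α) F

/-- The evaluation of the triple `⟨A, B, E⟩`: the least cardinality of an `E`-dominating
family `X ⊆ B`, i.e. of an `X` such that every `a ∈ A` is `E`-related to some `b ∈ X`. -/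
noncomputable def evalTriple {A B : Type u} (E : A → B → Prop) : Cardinal.{u} :=
  sInf {c | ∃ X : Set B, #X = c ∧ ∀ a : A, ∃ b ∈ X, E a b}

/-- The eventual domination relation `f ≤* g` on `ω^ω`. -/
def evDomLE (f g : ℕ → ℕ) : Prop := ∀ᶠ n in Filter.atTop, f n ≤ g n

/-- The rational interval `(qₙ − √2/k, qₙ + √2/k) ∩ ℚ`. -/
noncomputable def Jaux (q : ℕ → ℚ) (n k : ℕ) : Set ℚ :=
  {x : ℚ | (q n : ℝ) - Real.sqrt 2 / k < (x : ℝ) ∧ (x : ℝ) < (q n : ℝ) + Real.sqrt 2 / k}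

/-- The least (positive) `k` ensuring that `q m ∉ Jₙ` for every `m ≤ f n` with `m ≠ n`. -/
noncomputable def kleast (q : ℕ → ℚ) (f : ℕ → ℕ) (n : ℕ) : ℕ :=
  sInf {k : ℕ | 0 < k ∧ ∀ m ≤ f n, m ≠ n → q m ∉ Jaux q n k}

/-- The interval `Jₙ^f = (qₙ − √2/k, qₙ + √2/k) ∩ ℚ` with `k` least as above. -/
noncomputable def Jset (q : ℕ → ℚ) (f : ℕ → ℕ) (n : ℕ) : Set ℚ :=
  Jaux q n (kleast q f n)

/-- The shrinking of `X ⊆ ℚ` controlled by `f`: `shr(X,f) = ℚ ∖ ⋃_{qₙ ∉ X} Jₙ^f`. -/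
noncomputable def shrink (q : ℕ → ℚ) (X : Set ℚ) (f : ℕ → ℕ) : Set ℚ :=
  (⋃ n ∈ {n : ℕ | q n ∉ X}, Jset q f n)ᶜ

/-- A set `X ⊆ ℚ` is crowded if it has no isolated points: every point of `X` is in the
closure of `X` minus that point. -/
def Crowded (X : Set ℚ) : Prop := ∀ x ∈ X, x ∈ closure (X \ {x})

/-- A set `X ⊆ ℚ` is unbounded above. -/
def UnbAbove (X : Set ℚ) : Prop := ∀ r : ℚ, ∃ x ∈ X, r < x

/-- The recursive definition of the "fast-enough-growing function" `f_X` of `X ⊆ ℚ`. -/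
noncomputable def fX (q : ℕ → ℚ) (X : Set ℚ) : ℕ → ℕ
  | 0 => sInf {k | q k ∈ X}
  | n + 1 => sInf {k | fX q X n < k ∧
      (∀ i ≤ n, q i ∈ X → ∃ j ≤ k, fX q X n < j ∧ q j ∈ X ∧
        |q i - q j| < (1 : ℚ) / 2 ^ n ∧ q j ∉ ⋃ l ∈ Set.Ioc i n, Jset q id l) ∧
      (∃ i ≤ k, fX q X n < i ∧ q i ∈ X ∧ ((n : ℚ) + 1) < q i ∧
        q i ∉ ⋃ l ∈ Set.Iic n, Jset q id l)}

/-- `M(X)`: the maximal crowded subset of `X ⊆ ℚ` (the union of all crowded subsets). -/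
def Mx (X : Set ℚ) : Set ℚ := ⋃₀ {S : Set ℚ | S ⊆ X ∧ Crowded S}

/-- The fast-enough-growing function of `X ⊆ ℚ`: constantly `0` unless `X` is crowded
and unbounded above, in which case it is given by the recursion `fX`. -/
noncomputable def fgrowQ (q : ℕ → ℚ) (X : Set ℚ) : ℕ → ℕ := by
  classical exact if Crowded X ∧ UnbAbove X then fX q X else fun _ => 0

/-- The family `ℱ_{gruff} = {F_c, F_m, F_f, F_s, F_i}` of finitary operations on `ω^ω`,
relative to the coding functions `cd : ω^ω → 𝔓(ℚ)` and `dcd : 𝔓(ℚ) → ω^ω`. -/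
noncomputable def GruffOps (q : ℕ → ℚ) (cd : (ℕ → ℕ) → Set ℚ)
    (dcd : Set ℚ → (ℕ → ℕ)) : Set (Σ n : ℕ, (Fin n → (ℕ → ℕ)) → (ℕ → ℕ)) :=
  {⟨1, fun v => dcd (cd (v 0))ᶜ⟩,
   ⟨1, fun v => dcd (Mx (cd (v 0)))⟩,
   ⟨1, fun v => fgrowQ q (cd (v 0))⟩,
   ⟨2, fun v => dcd (shrink q (cd (v 0)) (v 1))⟩,
   ⟨2, fun v => dcd (cd (v 0) ∩ cd (v 1))⟩}

open Filter Topology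

section Crowded

theorem crowded_iff_preperfect {X : Set ℚ} : Crowded X ↔ Preperfect X :=
  forall₂_congr fun _ _ => mem_closure_iff_clusterPt.trans accPt_principal_iff_clusterPt.symm

theorem crowded_univ : Crowded (Set.univ : Set ℚ) :=
  crowded_iff_preperfect.2 (PerfectSpace.univ_perfect ℚ).acc

theorem Crowded.inter_isOpen {X O : Set ℚ} (hX : Crowded X) (hO : IsOpen O) :
    Crowded (X ∩ O) := by
  rw [crowded_iff_preperfect, inter_comm]
  exact (crowded_iff_preperfect.1 hX).open_inter hO

theorem mx_subset (X : Set ℚ) : Mx X ⊆ X :=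
  sUnion_subset fun _ hS => hS.1

theorem subset_mx {S X : Set ℚ} (hSX : S ⊆ X) (hS : Crowded S) : S ⊆ Mx X :=
  subset_sUnion_of_mem ⟨hSX, hS⟩

theorem crowded_mx (X : Set ℚ) : Crowded (Mx X) := by
  rintro x ⟨S, hS, hxS⟩
  exact closure_mono (sdiff_subset_sdiff_left (subset_mx hS.1 hS.2)) (hS.2 x hxS)

theorem mx_mono {X Y : Set ℚ} (h : X ⊆ Y) : Mx X ⊆ Mx Y :=
  subset_mx ((mx_subset X).trans h) (crowded_mx X)

theorem mx_inter_isOpen {X O : Set ℚ} (hO : IsOpen O) : Mx (X ∩ O) = Mx X ∩ O :=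
  (subset_inter (mx_mono inter_subset_left) ((mx_subset _).trans inter_subset_right)).antisymm
    (subset_mx (inter_subset_inter_left _ (mx_subset X)) ((crowded_mx X).inter_isOpen hO))

/-- If `M(A ∪ B) ∩ A` is not crowded, one of its isolated points has a punctured open
neighbourhood in `M(A ∪ B)`, which is crowded and lies in `B`. -/
theorem mx_union_nonempty {A B : Set ℚ} (h : (Mx (A ∪ B)).Nonempty) :
    (Mx A).Nonempty ∨ (Mx B).Nonempty := by
  set C := Mx (A ∪ B)
  have hC : Preperfect C := crowded_iff_preperfect.1 (crowded_mx _)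
  by_cases hCA : Preperfect (C ∩ A)
  · rcases (C ∩ A).eq_empty_or_nonempty with hempty | hne
    · refine .inr (h.mono (subset_mx (fun x hx => ?_) (crowded_mx _)))
      exact (mx_subset _ hx).resolve_left fun hxA => hempty.subset ⟨hx, hxA⟩
    · exact .inl (hne.mono (subset_mx inter_subset_right (crowded_iff_preperfect.2 hCA)))
  simp only [Preperfect, accPt_iff_nhds, not_forall, not_exists, not_and, not_not] at hCA
  obtain ⟨x, hx, U, hU, hUx⟩ := hCA
  obtain ⟨V, hVU, hV, hxV⟩ := mem_nhds_iff.1 hU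
  obtain ⟨y, ⟨hyV, hyC⟩, hyx⟩ := accPt_iff_nhds.1 (hC x hx.1) V (hV.mem_nhds hxV)
  have hD : Preperfect ((V ∩ {x}ᶜ) ∩ C) := hC.open_inter (hV.inter isOpen_compl_singleton)
  refine .inr ⟨y, subset_mx (fun z hz => ?_) (crowded_iff_preperfect.2 hD) ⟨⟨hyV, hyx⟩, hyC⟩⟩
  obtain ⟨⟨hzV, hzx⟩, hzC⟩ := hz
  exact (mx_subset _ hzC).resolve_left fun hzA => hzx (hUx z ⟨hVU hzV, hzC, hzA⟩)

theorem UnbAbove.mono {X Y : Set ℚ} (hX : UnbAbove X) (h : X ⊆ Y) : UnbAbove Y :=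
  fun r => (hX r).imp fun _ hx => ⟨h hx.1, hx.2⟩

theorem unbAbove_univ : UnbAbove (Set.univ : Set ℚ) :=
  fun r => ⟨r + 1, mem_univ _, lt_add_one r⟩

theorem unbAbove_mx_union {A B : Set ℚ} (h : UnbAbove (Mx (A ∪ B))) :
    UnbAbove (Mx A) ∨ UnbAbove (Mx B) := by
  by_contra! hAB
  simp only [UnbAbove, not_forall, not_exists, not_and, not_lt] at hAB
  obtain ⟨⟨a, ha⟩, b, hb⟩ := hAB
  obtain ⟨x, hx, hx'⟩ := h (max a b)
  have hne : (Mx (A ∩ Ioi (max a b) ∪ B ∩ Ioi (max a b))).Nonempty := by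
    rw [← union_inter_distrib_right, mx_inter_isOpen isOpen_Ioi]
    exact ⟨x, hx, hx'⟩
  rcases mx_union_nonempty hne with ⟨y, hy⟩ | ⟨y, hy⟩ <;>
    rw [mx_inter_isOpen isOpen_Ioi] at hy
  · exact (ha y hy.1).not_gt ((le_max_left a b).trans_lt hy.2)
  · exact (hb y hy.1).not_gt ((le_max_right a b).trans_lt hy.2)

end Crowded

section Indices

variable {q : ℕ → ℚ}

theorem eventually_cofinite_lt_of_eq (N : ℕ) : ∀ᶠ y in cofinite, ∀ j, q j = y → N < j :=
  ((finite_Iic N).image q).eventually_cofinite_notMem.mono fun _ hy j hj =>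
    not_le.1 fun hjN => hy ⟨j, hjN, hj⟩

theorem exists_index_near (hq : Function.Surjective q) {X W : Set ℚ} {x : ℚ} (hX : Crowded X)
    (hx : x ∈ X) (hW : W ∈ 𝓝 x) (N : ℕ) : ∃ j, N < j ∧ q j ∈ X ∩ W ∧ q j ≠ x := by
  have hacc : ∃ᶠ y in 𝓝[≠] x, y ∈ X :=
    accPt_iff_frequently_nhdsNE.1 (crowded_iff_preperfect.1 hX x hx)
  have hW' : ∀ᶠ y in 𝓝[≠] x, y ∈ W := mem_nhdsWithin_of_mem_nhds hW
  have hne : ∀ᶠ y in 𝓝[≠] x, y ≠ x := self_mem_nhdsWithin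
  obtain ⟨y, hyX, hyW, hyx, hyN⟩ := (hacc.and_eventually (hW'.and
    (hne.and (nhdsNE_le_cofinite x (eventually_cofinite_lt_of_eq N))))).exists
  obtain ⟨j, rfl⟩ := hq y
  exact ⟨j, hyN j rfl, ⟨hyX, hyW⟩, hyx⟩

theorem exists_index_large (hq : Function.Surjective q) {X W : Set ℚ} (hX : UnbAbove X)
    (hW : W ∈ atTop) (N : ℕ) : ∃ i, N < i ∧ q i ∈ X ∩ W := by
  have hfr : ∃ᶠ y in atTop, y ∈ X :=
    frequently_atTop'.2 fun r => (hX r).imp fun _ hx => ⟨hx.2, hx.1⟩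
  obtain ⟨y, hyX, hyW, hyN⟩ :=
    (hfr.and_eventually ((eventually_mem_set.2 hW).and
      (atTop_le_cofinite (eventually_cofinite_lt_of_eq N)))).exists
  obtain ⟨i, rfl⟩ := hq y
  exact ⟨i, hyN i rfl, hyX, hyW⟩

end Indices

section Intervals

variable {q : ℕ → ℚ} {f g : ℕ → ℕ} {n : ℕ}

theorem mem_jaux {x : ℚ} {k : ℕ} : x ∈ Jaux q n k ↔ |(x : ℝ) - q n| < √2 / k := by
  rw [abs_sub_lt_iff]
  exact ⟨fun ⟨h₁, h₂⟩ => ⟨by linarith, by linarith⟩, fun ⟨h₁, h₂⟩ => ⟨by linarith, by linarith⟩⟩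

theorem eventually_notMem_jaux {x : ℚ} (hx : x ≠ q n) : ∀ᶠ k in atTop, x ∉ Jaux q n k := by
  have hpos : 0 < |(x : ℝ) - q n| := abs_pos.2 (sub_ne_zero.2 (Rat.cast_injective.ne hx))
  filter_upwards [(tendsto_const_div_atTop_nhds_zero_nat √2).eventually (gt_mem_nhds hpos)]
    with k hk
  rw [mem_jaux, not_lt]
  exact hk.le

theorem kleast_spec (hq : Function.Injective q) (f : ℕ → ℕ) (n : ℕ) :
    0 < kleast q f n ∧ ∀ m ≤ f n, m ≠ n → q m ∉ Jset q f n := by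
  have hev : ∀ᶠ k in atTop, 0 < k ∧ ∀ m ∈ Iic (f n), m ≠ n → q m ∉ Jaux q n k :=
    (eventually_gt_atTop 0).and <| (eventually_all_finite (finite_Iic _)).2 fun m _ =>
      if hmn : m = n then .of_forall fun _ h => absurd hmn h
      else (eventually_notMem_jaux (hq.ne hmn)).mono fun _ h _ => h
  exact Nat.sInf_mem hev.exists

theorem notMem_jset (hq : Function.Injective q) {m : ℕ} (hm : m ≤ f n) (hmn : m ≠ n) :
    q m ∉ Jset q f n :=
  (kleast_spec hq f n).2 m hm hmn

theorem mem_jset_self (hq : Function.Injective q) : q n ∈ Jset q f n := by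
  rw [Jset, mem_jaux, sub_self, abs_zero]
  exact div_pos (by positivity) (by exact_mod_cast (kleast_spec hq f n).1)

theorem jset_subset_of_le (hq : Function.Injective q) (h : g n ≤ f n) :
    Jset q f n ⊆ Jset q g n := by
  have hk : kleast q g n ≤ kleast q f n :=
    Nat.sInf_le ⟨(kleast_spec hq f n).1, fun m hm => (kleast_spec hq f n).2 m (hm.trans h)⟩
  intro x hx
  rw [Jset, mem_jaux] at hx ⊢
  refine hx.trans_le (div_le_div_of_nonneg_left (by positivity) ?_ (by exact_mod_cast hk))
  exact_mod_cast (kleast_spec hq g n).1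

/-- The endpoints `qₙ ± √2/k` are irrational. -/
theorem isClopen_jset (hq : Function.Injective q) : IsClopen (Jset q f n) := by
  set r := √2 / kleast q f n
  have hr : Irrational r := irrational_sqrt_two.div_natCast (kleast_spec hq f n).1.ne'
  have hopen : Jset q f n = ((↑) : ℚ → ℝ) ⁻¹' Ioo ((q n : ℝ) - r) (q n + r) := rfl
  have hclosed : Jset q f n = ((↑) : ℚ → ℝ) ⁻¹' Icc ((q n : ℝ) - r) (q n + r) := by
    rw [hopen]
    ext x
    have h₁ := (hr.ratCast_sub (q n)).ne_rat x
    have h₂ := (hr.ratCast_add (q n)).ne_rat x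
    exact ⟨fun h => ⟨h.1.le, h.2.le⟩, fun h => ⟨h.1.lt_of_ne h₁, h.2.lt_of_ne' h₂⟩⟩
  exact ⟨hclosed ▸ isClosed_Icc.preimage Rat.continuous_coe_real,
    hopen ▸ isOpen_Ioo.preimage Rat.continuous_coe_real⟩

theorem bddAbove_jset (hq : Function.Injective q) : BddAbove (Jset q f n) := by
  refine ⟨q n + 2, fun x hx => ?_⟩
  rw [Jset, mem_jaux, abs_sub_lt_iff] at hx
  have hk : (1 : ℝ) ≤ kleast q f n := by exact_mod_cast (kleast_spec hq f n).1
  have hr : √2 / kleast q f n ≤ √2 := div_le_self (by positivity) hk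
  have h2 : √2 < 2 := by rw [Real.sqrt_lt' two_pos]; norm_num
  exact_mod_cast (show (x : ℝ) ≤ q n + 2 by linarith [hx.1])

end Intervals

section GrowthFunction

variable {q : ℕ → ℚ} {X : Set ℚ}

theorem exists_index_approx (hq : Function.Bijective q) (hX : Crowded X) {i : ℕ} (hi : q i ∈ X)
    (n N : ℕ) : ∃ j, N < j ∧ q j ∈ X ∧ |q i - q j| < (1 : ℚ) / 2 ^ n ∧
      q j ∉ ⋃ l ∈ Ioc i n, Jset q id l := by
  have hfar : q i ∉ ⋃ l ∈ Ioc i n, Jset q id l := by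
    simp only [mem_iUnion, not_exists]
    exact fun l hl => notMem_jset hq.1 (f := id) hl.1.le hl.1.ne
  have hball : ∀ᶠ y in 𝓝 (q i), |q i - y| < (1 : ℚ) / 2 ^ n :=
    (eventually_abs_sub_lt (q i) (ε := (1 : ℚ) / 2 ^ n) (by positivity)).mono fun y hy => by
      rwa [abs_sub_comm] at hy
  have hW : {y | |q i - y| < (1 : ℚ) / 2 ^ n} ∩ (⋃ l ∈ Ioc i n, Jset q id l)ᶜ ∈ 𝓝 (q i) :=
    inter_mem hball (((finite_Ioc i n).isClosed_biUnion fun l _ =>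
      (isClopen_jset hq.1).isClosed).isOpen_compl.mem_nhds hfar)
  obtain ⟨j, hjN, ⟨hjX, hji, hjJ⟩, -⟩ := exists_index_near hq.2 hX hi hW N
  exact ⟨j, hjN, hjX, hji, hjJ⟩

theorem exists_index_beyond (hq : Function.Bijective q) (hX : UnbAbove X) (n N : ℕ) :
    ∃ i, N < i ∧ q i ∈ X ∧ ((n : ℚ) + 1) < q i ∧ q i ∉ ⋃ l ∈ Iic n, Jset q id l := by
  obtain ⟨b, hb⟩ := (finite_Iic n).bddAbove_biUnion.2 fun l _ => bddAbove_jset hq.1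
  have hW : Ioi ((n : ℚ) + 1) ∩ Ioi b ∈ atTop := inter_mem (Ioi_mem_atTop _) (Ioi_mem_atTop _)
  obtain ⟨i, hiN, hiX, hi₁, hi₂⟩ := exists_index_large hq.2 hX hW N
  exact ⟨i, hiN, hiX, hi₁, fun h => (hb h).not_gt hi₂⟩

theorem fX_succ_spec (hq : Function.Bijective q) (hX : Crowded X) (hX' : UnbAbove X) (n : ℕ) :
    fX q X n < fX q X (n + 1) ∧
      (∀ i ≤ n, q i ∈ X → ∃ j ≤ fX q X (n + 1), fX q X n < j ∧ q j ∈ X ∧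
        |q i - q j| < (1 : ℚ) / 2 ^ n ∧ q j ∉ ⋃ l ∈ Ioc i n, Jset q id l) ∧
      (∃ i ≤ fX q X (n + 1), fX q X n < i ∧ q i ∈ X ∧ ((n : ℚ) + 1) < q i ∧
        q i ∉ ⋃ l ∈ Iic n, Jset q id l) := by
  have happrox : ∀ i ∈ Iic n, ∀ᶠ k in atTop, q i ∈ X → ∃ j ≤ k, fX q X n < j ∧ q j ∈ X ∧
      |q i - q j| < (1 : ℚ) / 2 ^ n ∧ q j ∉ ⋃ l ∈ Ioc i n, Jset q id l := by
    intro i _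
    by_cases hi : q i ∈ X
    · obtain ⟨j, hj⟩ := exists_index_approx hq hX hi n (fX q X n)
      exact (eventually_ge_atTop j).mono fun k hk _ => ⟨j, hk, hj⟩
    · exact .of_forall fun _ h => absurd h hi
  have hbeyond : ∀ᶠ k in atTop, ∃ i ≤ k, fX q X n < i ∧ q i ∈ X ∧ ((n : ℚ) + 1) < q i ∧
      q i ∉ ⋃ l ∈ Iic n, Jset q id l := by
    obtain ⟨i, hi⟩ := exists_index_beyond hq hX' n (fX q X n)
    exact (eventually_ge_atTop i).mono fun k hk => ⟨i, hk, hi⟩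
  have hev := (eventually_gt_atTop (fX q X n)).and
    (((eventually_all_finite (finite_Iic n)).2 happrox).and hbeyond)
  exact Nat.sInf_mem hev.exists

theorem le_fX (hq : Function.Bijective q) (hX : Crowded X) (hX' : UnbAbove X) (n : ℕ) :
    n ≤ fX q X n :=
  (strictMono_nat_of_lt_succ fun n => (fX_succ_spec hq hX hX' n).1).id_le n

theorem fgrowQ_eq (hX : Crowded X) (hX' : UnbAbove X) : fgrowQ q X = fX q X :=
  if_pos ⟨hX, hX'⟩

end GrowthFunction

section Shrink

variable {q : ℕ → ℚ} {X : Set ℚ} {F : ℕ → ℕ}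

theorem mem_shrink {y : ℚ} : y ∈ shrink q X F ↔ ∀ n, q n ∉ X → y ∉ Jset q F n := by
  simp [shrink]

theorem shrink_subset (hq : Function.Bijective q) : shrink q X F ⊆ X := fun y hy => by
  obtain ⟨m, rfl⟩ := hq.2 y
  by_contra hm
  exact mem_shrink.1 hy m hm (mem_jset_self hq.1)

theorem shrink_mono {Y : Set ℚ} (h : X ⊆ Y) : shrink q X F ⊆ shrink q Y F := fun _ hy =>
  mem_shrink.2 fun n hn => mem_shrink.1 hy n fun hX => hn (h hX)

theorem isClosed_shrink (hq : Function.Injective q) : IsClosed (shrink q X F) :=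
  (isOpen_biUnion fun _ _ => (isClopen_jset hq).isOpen).isClosed_compl

theorem mem_shrink_of_le (hq : Function.Injective q) (hF : Monotone F) {j n : ℕ} (hjX : q j ∈ X)
    (hjF : j ≤ F n) (hsmall : ∀ m ≤ n, q m ∉ X → q j ∉ Jset q F m) : q j ∈ shrink q X F :=
  mem_shrink.2 fun m hm => (le_or_gt m n).elim (hsmall m · hm) fun hnm =>
    notMem_jset hq (hjF.trans (hF hnm.le)) fun hjm => hm (hjm ▸ hjX)

theorem unbAbove_shrink (hq : Function.Bijective q) (hX : Crowded X) (hX' : UnbAbove X)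
    (hF : Monotone F) (hFid : ∀ n, n ≤ F n) (hesc : ∃ᶠ n in atTop, fX q X (n + 1) < F n) :
    UnbAbove (shrink q X F) := by
  intro r
  obtain ⟨n, hn, hrn⟩ := (hesc.and_eventually (eventually_ge_atTop ⌈r⌉₊)).exists
  obtain ⟨-, -, i, hi, -, hiX, hin, hiJ⟩ := fX_succ_spec hq hX hX' n
  refine ⟨q i, mem_shrink_of_le hq.1 hF hiX (hi.trans hn.le) fun m hm _ hmJ =>
    hiJ (mem_biUnion hm (jset_subset_of_le hq.1 (hFid m) hmJ)), ?_⟩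
  have : r ≤ n := (Nat.le_ceil r).trans (by exact_mod_cast hrn)
  linarith

theorem crowded_shrink (hq : Function.Bijective q) (hX : Crowded X) (hX' : UnbAbove X)
    (hF : Monotone F) (hFid : ∀ n, n ≤ F n) (hesc : ∃ᶠ n in atTop, fX q X (n + 1) < F n) :
    Crowded (shrink q X F) := by
  refine crowded_iff_preperfect.2 (preperfect_iff_nhds.2 fun y hy W hW => ?_)
  obtain ⟨i, rfl⟩ := hq.2 y
  have hV : {y | ∀ m ≤ i, q m ∉ X → y ∉ Jset q F m} ∩ W ∈ 𝓝 (q i) := by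
    refine inter_mem ((eventually_all_finite (finite_Iic i)).2 fun m _ => ?_) hW
    by_cases hm : q m ∈ X
    · exact .of_forall fun _ h => absurd hm h
    · exact mem_of_superset ((isClopen_jset hq.1).isClosed.isOpen_compl.mem_nhds
        (mem_shrink.1 hy m hm)) fun _ h _ => h
  obtain ⟨ε, hε, hεV⟩ := (nhds_basis_abs_sub_lt (q i)).mem_iff.1 hV
  have hsmall : ∀ᶠ n : ℕ in atTop, (1 : ℚ) / 2 ^ n < ε := by
    have h := tendsto_pow_atTop_nhds_zero_of_lt_one (r := (1 / 2 : ℚ)) (by norm_num) (by norm_num)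
    exact (h.eventually (gt_mem_nhds hε)).mono fun n hn => by rwa [one_div_pow] at hn
  obtain ⟨n, hn, hin, hnε⟩ :=
    (hesc.and_eventually ((eventually_ge_atTop i).and hsmall)).exists
  obtain ⟨j, hj, hjn, hjX, hij, hjJ⟩ := (fX_succ_spec hq hX hX' n).2.1 i hin (shrink_subset hq hy)
  have hjV : q j ∈ _ := hεV (show |q j - q i| < ε by rw [abs_sub_comm]; exact hij.trans hnε)
  refine ⟨q j, ⟨hjV.2, mem_shrink_of_le hq.1 hF hjX (hj.trans hn.le) fun m hmn hm => ?_⟩, ?_⟩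
  · rcases le_or_gt m i with hmi | hmi
    · exact hjV.1 m hmi hm
    · exact fun hmJ => hjJ (mem_biUnion ⟨hmi, hmn⟩ (jset_subset_of_le hq.1 (hFid m) hmJ))
  · have := le_fX hq hX hX' n
    exact hq.1.ne (by omega)

end Shrink

section UltrafilterIn

variable {α : Type*}

structure IsUltrafilterIn (𝒜 U : Set (Set α)) : Prop where
  subset : U ⊆ 𝒜
  univ_mem : Set.univ ∈ U
  empty_notMem : ∅ ∉ U
  inter_mem ⦃X Y : Set α⦄ : X ∈ U → Y ∈ U → X ∩ Y ∈ U
  mem_or_compl_mem ⦃Y : Set α⦄ : Y ∈ 𝒜 → Y ∈ U ∨ Yᶜ ∈ U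

namespace IsUltrafilterIn

variable {𝒜 U : Set (Set α)}

theorem mem_of_superset (h : IsUltrafilterIn 𝒜 U) {X Y : Set α} (hX : X ∈ U) (hY : Y ∈ 𝒜)
    (hXY : X ⊆ Y) : Y ∈ U :=
  (h.mem_or_compl_mem hY).resolve_right fun hYc => h.empty_notMem <| by
    have : X \ Y ∈ U := h.inter_mem hX hYc
    rwa [sdiff_eq_empty.2 hXY] at this

theorem iUnion {ι : Sort*} [Nonempty ι] {𝒜 U : ι → Set (Set α)}
    (h : ∀ i, IsUltrafilterIn (𝒜 i) (U i)) (hU : Directed (· ⊆ ·) U) :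
    IsUltrafilterIn (⋃ i, 𝒜 i) (⋃ i, U i) where
  subset := iUnion_mono fun i => (h i).subset
  univ_mem := mem_iUnion.2 ⟨Classical.arbitrary ι, (h _).univ_mem⟩
  empty_notMem := by
    simp only [mem_iUnion, not_exists]
    exact fun i => (h i).empty_notMem
  inter_mem X Y hX hY := by
    obtain ⟨i, hX⟩ := mem_iUnion.1 hX
    obtain ⟨j, hY⟩ := mem_iUnion.1 hY
    obtain ⟨k, hik, hjk⟩ := hU i j
    exact mem_iUnion.2 ⟨k, (h k).inter_mem (hik hX) (hjk hY)⟩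
  mem_or_compl_mem Y hY := by
    obtain ⟨i, hY⟩ := mem_iUnion.1 hY
    exact ((h i).mem_or_compl_mem hY).imp (mem_iUnion_of_mem i) (mem_iUnion_of_mem i)

def toUltrafilter (h : IsUltrafilterIn Set.univ U) : Ultrafilter α :=
  .ofComplNotMemIff
    { sets := U
      univ_sets := h.univ_mem
      sets_of_superset := fun hX hXY => h.mem_of_superset hX trivial hXY
      inter_sets := fun hX hY => h.inter_mem hX hY }
    fun s => ⟨fun hs => (h.mem_or_compl_mem trivial).resolve_right hs,
      fun hs hsc => h.empty_notMem (inter_compl_self s ▸ h.inter_mem hs hsc)⟩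

theorem mem_toUltrafilter (h : IsUltrafilterIn Set.univ U) {s : Set α} :
    s ∈ h.toUltrafilter ↔ s ∈ U :=
  Iff.rfl

end IsUltrafilterIn

theorem exists_isUltrafilterIn {𝒜 G : Set (Set α)} {Small : Set α → Prop}
    (compl_mem : ∀ X ∈ 𝒜, Xᶜ ∈ 𝒜) (inter_mem : ∀ X ∈ 𝒜, ∀ Y ∈ 𝒜, X ∩ Y ∈ 𝒜)
    (small_empty : Small ∅) (small_mono : ∀ ⦃X Y⦄, X ⊆ Y → Small Y → Small X)
    (small_union : ∀ ⦃X Y⦄, Small X → Small Y → Small (X ∪ Y))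
    (hG : G ⊆ 𝒜) (hGuniv : Set.univ ∈ G) (hGinter : ∀ X ∈ G, ∀ Y ∈ G, X ∩ Y ∈ G)
    (hGsmall : ∀ X ∈ G, ¬ Small X) :
    ∃ U, IsUltrafilterIn 𝒜 U ∧ G ⊆ U ∧ ∀ X ∈ U, ¬ Small X := by
  set S : Set (Set (Set α)) :=
    {M | G ⊆ M ∧ M ⊆ 𝒜 ∧ (∀ X ∈ M, ∀ Y ∈ M, X ∩ Y ∈ M) ∧ ∀ X ∈ M, ¬ Small X}
  have hchain : ∀ c ⊆ S, IsChain (· ⊆ ·) c → c.Nonempty → ∃ M ∈ S, ∀ M' ∈ c, M' ⊆ M := by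
    rintro c hcS hc ⟨M₀, hM₀⟩
    refine ⟨⋃₀ c, ⟨(hcS hM₀).1.trans (subset_sUnion_of_mem hM₀),
      sUnion_subset fun M hM => (hcS hM).2.1, ?_, ?_⟩, fun _ => subset_sUnion_of_mem⟩
    · rintro X ⟨M, hM, hX⟩ Y ⟨M', hM', hY⟩
      rcases hc.total hM hM' with h | h
      · exact ⟨M', hM', (hcS hM').2.2.1 X (h hX) Y hY⟩
      · exact ⟨M, hM, (hcS hM).2.2.1 X hX Y (h hY)⟩
    · rintro X ⟨M, hM, hX⟩
      exact (hcS hM).2.2.2 X hX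
  obtain ⟨M, hGM, hM⟩ := zorn_subset_nonempty S hchain G ⟨subset_rfl, hG, hGinter, hGsmall⟩
  obtain ⟨-, hM𝒜, hMinter, hMsmall⟩ := hM.prop
  have hext : ∀ Y ∈ 𝒜, Y ∉ M → ∃ Z ∈ M, Small (Z ∩ Y) := by
    intro Y hY hYM
    by_contra! hY'
    refine hYM (hM.2 (y := {X ∈ 𝒜 | ∃ Z ∈ M, Z ∩ Y ⊆ X}) ⟨?_, fun X hX => hX.1, ?_, ?_⟩
      (fun X hX => ⟨hM𝒜 hX, X, hX, inter_subset_left⟩)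
      ⟨hY, Set.univ, hGM hGuniv, inter_subset_right⟩)
    · exact fun X hX => ⟨hM𝒜 (hGM hX), X, hGM hX, inter_subset_left⟩
    · rintro X ⟨hX, Z, hZ, hZX⟩ X' ⟨hX', Z', hZ', hZX'⟩
      refine ⟨inter_mem X hX X' hX', Z ∩ Z', hMinter Z hZ Z' hZ', ?_⟩
      exact fun x hx => ⟨hZX ⟨hx.1.1, hx.2⟩, hZX' ⟨hx.1.2, hx.2⟩⟩
    · rintro X ⟨-, Z, hZ, hZX⟩ hX
      exact hY' Z hZ (small_mono hZX hX)
  refine ⟨M, ⟨hM𝒜, hGM hGuniv, fun h => hMsmall ∅ h small_empty,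
    fun X Y hX hY => hMinter X hX Y hY, fun Y hY => ?_⟩, hGM, hMsmall⟩
  by_contra! hYM
  obtain ⟨Z, hZ, hZY⟩ := hext Y hY hYM.1
  obtain ⟨Z', hZ', hZ'Y⟩ := hext Yᶜ (compl_mem Y hY) hYM.2
  refine hMsmall _ (hMinter Z hZ Z' hZ') (small_mono (fun x hx => ?_) (small_union hZY hZ'Y))
  by_cases hxY : x ∈ Y
  exacts [.inl ⟨hx.1, hxY⟩, .inr ⟨hx.2, hxY⟩]

end UltrafilterIn

theorem exists_isUltrafilterIn_unbAbove_mx {𝒜 G : Set (Set ℚ)}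
    (compl_mem : ∀ X ∈ 𝒜, Xᶜ ∈ 𝒜) (inter_mem : ∀ X ∈ 𝒜, ∀ Y ∈ 𝒜, X ∩ Y ∈ 𝒜)
    (hG : G ⊆ 𝒜) (hGuniv : Set.univ ∈ G) (hGinter : ∀ X ∈ G, ∀ Y ∈ G, X ∩ Y ∈ G)
    (hGunb : ∀ X ∈ G, UnbAbove (Mx X)) :
    ∃ U, IsUltrafilterIn 𝒜 U ∧ G ⊆ U ∧ ∀ X ∈ U, UnbAbove (Mx X) := by
  obtain ⟨U, hU, hGU, hUunb⟩ := exists_isUltrafilterIn (Small := fun X => ¬ UnbAbove (Mx X))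
    compl_mem inter_mem (fun h => (h 0).elim fun _ hx => mx_subset ∅ hx.1)
    (fun _ _ hXY hY hX => hY (hX.mono (mx_mono hXY)))
    (fun _ _ hX hY h => (unbAbove_mx_union h).elim hX hY)
    hG hGuniv hGinter fun X hX h => h (hGunb X hX)
  exact ⟨U, hU, hGU, fun X hX => not_not.1 (hUunb X hX)⟩

section GruffOps

variable {q : ℕ → ℚ} {cd : (ℕ → ℕ) → Set ℚ} {dcd : Set ℚ → ℕ → ℕ} {S : Set (ℕ → ℕ)}

theorem compl_mem_image (hid : ∀ X : Set ℚ, cd (dcd X) = X)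
    (hS : ∀ F ∈ GruffOps q cd dcd, ClosedUnderOp S F) {X : Set ℚ} (hX : X ∈ cd '' S) :
    Xᶜ ∈ cd '' S := by
  obtain ⟨g, hg, rfl⟩ := hX
  exact ⟨_, hS _ (.inl rfl) (fun _ => g) fun _ => hg, hid _⟩

theorem mx_mem_image (hid : ∀ X : Set ℚ, cd (dcd X) = X)
    (hS : ∀ F ∈ GruffOps q cd dcd, ClosedUnderOp S F) {X : Set ℚ} (hX : X ∈ cd '' S) :
    Mx X ∈ cd '' S := by
  obtain ⟨g, hg, rfl⟩ := hX
  exact ⟨_, hS _ (.inr (.inl rfl)) (fun _ => g) fun _ => hg, hid _⟩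

theorem fgrowQ_mem (hS : ∀ F ∈ GruffOps q cd dcd, ClosedUnderOp S F) {X : Set ℚ}
    (hX : X ∈ cd '' S) : fgrowQ q X ∈ S := by
  obtain ⟨g, hg, rfl⟩ := hX
  exact hS _ (.inr (.inr (.inl rfl))) (fun _ => g) fun _ => hg

theorem shrink_mem_image (hid : ∀ X : Set ℚ, cd (dcd X) = X)
    (hS : ∀ F ∈ GruffOps q cd dcd, ClosedUnderOp S F) {X : Set ℚ} (hX : X ∈ cd '' S)
    {F : ℕ → ℕ} (hF : F ∈ S) : shrink q X F ∈ cd '' S := by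
  obtain ⟨g, hg, rfl⟩ := hX
  exact ⟨_, hS _ (.inr (.inr (.inr (.inl rfl)))) ![g, F] (Fin.forall_fin_two.2 ⟨hg, hF⟩), hid _⟩

theorem inter_mem_image (hid : ∀ X : Set ℚ, cd (dcd X) = X)
    (hS : ∀ F ∈ GruffOps q cd dcd, ClosedUnderOp S F) {X Y : Set ℚ} (hX : X ∈ cd '' S)
    (hY : Y ∈ cd '' S) : X ∩ Y ∈ cd '' S := by
  obtain ⟨g, hg, rfl⟩ := hX
  obtain ⟨h, hh, rfl⟩ := hY
  exact ⟨_, hS _ (.inr (.inr (.inr (.inr rfl)))) ![g, h] (Fin.forall_fin_two.2 ⟨hg, hh⟩), hid _⟩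

end GruffOps

namespace IsPathway

variable {A B : Type*} {E : A → B → Prop} {𝓕 : Set (Σ n : ℕ, (Fin n → B) → B)} {δ : Ordinal}
  {seq : Ordinal → Set B}

theorem exists_mem (hp : IsPathway E 𝓕 δ seq) (b : B) : ∃ β < δ, b ∈ seq β := by
  have hb : b ∈ ⋃ α : Ordinal, ⋃ _ : α < δ, seq α := hp.total ▸ mem_univ b
  simpa using hb

theorem isSuccLimit [Nonempty B] (hp : IsPathway E 𝓕 δ seq) (hE : ∀ a, ∃ b, E a b) :
    Order.IsSuccLimit δ := by
  rcases Ordinal.zero_or_succ_or_isSuccLimit δ with rfl | ⟨β, rfl⟩ | h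
  · obtain ⟨β, hβ, -⟩ := hp.exists_mem (Classical.arbitrary B)
    exact (not_lt_zero hβ).elim
  · obtain ⟨a, ha⟩ := hp.avoid β (Order.lt_succ β)
    obtain ⟨b, hb⟩ := hE a
    obtain ⟨α, hα, hbα⟩ := hp.exists_mem b
    exact (ha b (hp.mono α β (Order.lt_succ_iff.1 hα) (Order.lt_succ β) hbα) hb).elim
  · exact h

theorem seq_csSup_subset (hp : IsPathway E 𝓕 δ seq) {L : Set Ordinal} (hL : L.Nonempty)
    (hbdd : BddAbove L) (hLδ : sSup L < δ) : seq (sSup L) ⊆ ⋃ β ∈ L, seq β := by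
  by_cases hmem : sSup L ∈ L
  · exact subset_biUnion_of_mem hmem
  rw [hp.cont _ hLδ ((isLUB_csSup hL hbdd).isSuccLimit_of_notMem hL hmem)]
  refine iUnion₂_subset fun α hα => ?_
  obtain ⟨β, hβ, hαβ⟩ := exists_lt_of_lt_csSup hL hα
  exact (hp.mono α β hαβ.le ((le_csSup hbdd hβ).trans_lt hLδ)).trans (subset_biUnion_of_mem hβ)

end IsPathway

theorem exists_monotone_frequently_lt (f : ℕ → ℕ) :
    ∃ F : ℕ → ℕ, Monotone F ∧ (∀ n, n ≤ F n) ∧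
      ∀ g, ¬ evDomLE f g → ∃ᶠ n in atTop, g (n + 1) < F n := by
  refine ⟨fun n => n + ∑ m ∈ Finset.range (n + 2), f m, fun a b hab => ?_, fun n => le_self_add,
    fun g hfg => frequently_atTop.2 fun a => ?_⟩
  · exact add_le_add hab (Finset.sum_le_sum_of_subset (Finset.range_subset_range.2 (by omega)))
  · obtain ⟨m, ham, hm⟩ := frequently_atTop.1 (not_eventually.1 hfg) (a + 1)
    refine ⟨m - 1, by omega, ?_⟩
    have hfm : f m ≤ ∑ k ∈ Finset.range (m - 1 + 2), f k :=
      Finset.single_le_sum (fun _ _ => Nat.zero_le _) (Finset.mem_range.2 (by omega))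
    rw [Nat.sub_add_cancel (by omega : 1 ≤ m)]
    exact (not_le.1 hm).trans_le (hfm.trans le_add_self)

structure Stage (cd : (ℕ → ℕ) → Set ℚ) (seq : Ordinal → Set (ℕ → ℕ)) (δ : Ordinal) where
  level : Ordinal
  sets : Set (Set ℚ)
  level_lt : level < δ
  isUltrafilterIn : IsUltrafilterIn (cd '' seq level) sets
  unbAbove_mx : ∀ X ∈ sets, UnbAbove (Mx X)

namespace Stage

variable {q : ℕ → ℚ} {cd : (ℕ → ℕ) → Set ℚ} {dcd : Set ℚ → ℕ → ℕ}
  {seq : Ordinal → Set (ℕ → ℕ)} {δ : Ordinal}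

def Refines (s t : Stage cd seq δ) : Prop :=
  s.level < t.level ∧ s.sets ⊆ t.sets ∧
    ∀ Z ∈ s.sets, ∃ P ∈ t.sets, P ⊆ Z ∧ IsClosed P ∧ Crowded P

theorem Refines.trans {s t u : Stage cd seq δ} (hst : s.Refines t) (htu : t.Refines u) :
    s.Refines u := by
  refine ⟨hst.1.trans htu.1, hst.2.1.trans htu.2.1, fun Z hZ => ?_⟩
  obtain ⟨P, hP, hPZ⟩ := hst.2.2 Z hZ
  exact ⟨P, htu.2.1 hP, hPZ⟩

instance : Preorder (Stage cd seq δ) where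
  le s t := s = t ∨ s.Refines t
  le_refl _ := .inl rfl
  le_trans _ _ _ := by
    rintro (rfl | hst) (rfl | htu)
    exacts [.inl rfl, .inr htu, .inr hst, .inr (hst.trans htu)]

theorem sets_subset_of_le {s t : Stage cd seq δ} (h : s ≤ t) : s.sets ⊆ t.sets :=
  h.elim (fun h => h ▸ subset_rfl) fun h => h.2.1

theorem level_le_of_le {s t : Stage cd seq δ} (h : s ≤ t) : s.level ≤ t.level :=
  h.elim (fun h => h ▸ le_rfl) fun h => h.1.le

theorem refines_of_mem_chain {c : Set (Stage cd seq δ)} (hc : IsChain (· ≤ ·) c)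
    {s t : Stage cd seq δ} (hs : s ∈ c) (ht : t ∈ c) (hlt : s.level < t.level) : s.Refines t := by
  rcases hc.total hs ht with (rfl | h) | h
  · exact absurd hlt (lt_irrefl _)
  · exact h
  · exact absurd (level_le_of_le h) hlt.not_ge

theorem isUltrafilterIn_iUnion {c : Set (Stage cd seq δ)} (hc : IsChain (· ≤ ·) c)
    (hne : c.Nonempty) :
    IsUltrafilterIn (⋃ s : c, cd '' seq s.1.level) (⋃ s : c, s.1.sets) :=
  haveI := hne.to_subtype
  IsUltrafilterIn.iUnion (fun s => s.1.isUltrafilterIn) fun s t =>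
    (hc.total s.2 t.2).elim (fun h => ⟨t, sets_subset_of_le h, subset_rfl⟩)
      fun h => ⟨s, subset_rfl, sets_subset_of_le h⟩

theorem nonempty (hid : ∀ X : Set ℚ, cd (dcd X) = X)
    (hp : IsPathway evDomLE (GruffOps q cd dcd) δ seq) : Nonempty (Stage cd seq δ) := by
  obtain ⟨β, hβ, hunivβ⟩ := hp.exists_mem (dcd Set.univ)
  have hS := hp.closedF β hβ
  obtain ⟨U, hU, -, hUunb⟩ := exists_isUltrafilterIn_unbAbove_mx (G := {Set.univ})
    (fun _ => compl_mem_image hid hS) (fun _ hX _ hY => inter_mem_image hid hS hX hY)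
    (singleton_subset_iff.2 ⟨_, hunivβ, hid _⟩) rfl (by rintro _ rfl _ rfl; exact inter_self _)
    (by rintro _ rfl; exact unbAbove_univ.mono (subset_mx subset_rfl crowded_univ))
  exact ⟨⟨β, U, hβ, hU, hUunb⟩⟩

theorem crowded_unbAbove_shrink_mx (hq : Function.Bijective q) (hid : ∀ X : Set ℚ, cd (dcd X) = X)
    (hp : IsPathway evDomLE (GruffOps q cd dcd) δ seq) (s : Stage cd seq δ) {F : ℕ → ℕ}
    (hF : Monotone F) (hFid : ∀ n, n ≤ F n)
    (hesc : ∀ g ∈ seq s.level, ∃ᶠ n in atTop, g (n + 1) < F n) {Z : Set ℚ} (hZ : Z ∈ s.sets) :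
    Crowded (shrink q (Mx Z) F) ∧ UnbAbove (shrink q (Mx Z) F) := by
  have hS := hp.closedF s.level s.level_lt
  have hcr := crowded_mx Z
  have hunb := s.unbAbove_mx Z hZ
  have hfX : ∃ᶠ n in atTop, fX q (Mx Z) (n + 1) < F n := by
    simpa only [fgrowQ_eq hcr hunb] using
      hesc _ (fgrowQ_mem hS (mx_mem_image hid hS (s.isUltrafilterIn.subset hZ)))
  exact ⟨crowded_shrink hq hcr hunb hF hFid hfX, unbAbove_shrink hq hcr hunb hF hFid hfX⟩

theorem exists_refines (hq : Function.Bijective q) (hid : ∀ X : Set ℚ, cd (dcd X) = X)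
    (hp : IsPathway evDomLE (GruffOps q cd dcd) δ seq) (hδ : Order.IsSuccLimit δ)
    (s : Stage cd seq δ) : ∃ t : Stage cd seq δ, s.Refines t := by
  obtain ⟨f, hf⟩ := hp.avoid s.level s.level_lt
  obtain ⟨F, hF, hFid, hesc⟩ := exists_monotone_frequently_lt f
  obtain ⟨β, hβ, hFβ⟩ := hp.exists_mem F
  set ℓ := max (Order.succ s.level) β
  have hℓ : ℓ < δ := max_lt (hδ.succ_lt s.level_lt) hβ
  have hsℓ : s.level < ℓ := (Order.lt_succ _).trans_le (le_max_left _ _)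
  have hS := hp.closedF ℓ hℓ
  have hsub : s.sets ⊆ cd '' seq ℓ :=
    s.isUltrafilterIn.subset.trans (image_mono (hp.mono _ _ hsℓ.le hℓ))
  set Sh := fun Z => shrink q (Mx Z) F
  have hSh : ∀ Z ∈ s.sets, Sh Z ∈ cd '' seq ℓ ∧ Crowded (Sh Z) ∧ UnbAbove (Sh Z) :=
    fun Z hZ => ⟨shrink_mem_image hid hS (mx_mem_image hid hS (hsub hZ))
        (hp.mono β ℓ (le_max_right _ _) hℓ hFβ),
      s.crowded_unbAbove_shrink_mx hq hid hp hF hFid (fun g hg => hesc g (hf g hg)) hZ⟩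
  have hShZ : ∀ Z, Sh Z ⊆ Z := fun Z => (shrink_subset hq).trans (mx_subset Z)
  have hShmono : Monotone Sh := fun _ _ h => shrink_mono (mx_mono h)
  obtain ⟨U, hU, hGU, hUunb⟩ := exists_isUltrafilterIn_unbAbove_mx
    (G := {W ∈ cd '' seq ℓ | ∃ Z ∈ s.sets, Sh Z ⊆ W})
    (fun _ => compl_mem_image hid hS) (fun _ hX _ hY => inter_mem_image hid hS hX hY)
    (fun _ hW => hW.1)
    ⟨hsub s.isUltrafilterIn.univ_mem, Set.univ, s.isUltrafilterIn.univ_mem, subset_univ _⟩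
    (by
      rintro W ⟨hW, Z, hZ, hZW⟩ W' ⟨hW', Z', hZ', hZW'⟩
      exact ⟨inter_mem_image hid hS hW hW', Z ∩ Z', s.isUltrafilterIn.inter_mem hZ hZ',
        subset_inter ((hShmono inter_subset_left).trans hZW)
          ((hShmono inter_subset_right).trans hZW')⟩)
    (by
      rintro W ⟨-, Z, hZ, hZW⟩
      exact (hSh Z hZ).2.2.mono (subset_mx hZW (hSh Z hZ).2.1))
  exact ⟨⟨ℓ, U, hℓ, hU, hUunb⟩, hsℓ, fun Z hZ => hGU ⟨hsub hZ, Z, hZ, hShZ Z⟩,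
    fun Z hZ => ⟨Sh Z, hGU ⟨(hSh Z hZ).1, Z, hZ, subset_rfl⟩, hShZ Z, isClosed_shrink hq.1,
      (hSh Z hZ).2.1⟩⟩

/-- The bound is the top element of the chain if there is one, and otherwise the union of the
chain, a stage at the supremum of the levels by continuity of the pathway. -/
theorem bddAbove_of_isChain (hp : IsPathway evDomLE (GruffOps q cd dcd) δ seq)
    {c : Set (Stage cd seq δ)} (hc : IsChain (· ≤ ·) c) (hne : c.Nonempty)
    (hbdd : ∃ β < δ, ∀ s ∈ c, s.level ≤ β) : BddAbove c := by
  by_cases htop : ∃ s ∈ c, ∀ t ∈ c, t.level ≤ s.level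
  · obtain ⟨s, hs, htop⟩ := htop
    refine ⟨s, fun t ht => ?_⟩
    rcases hc.total ht hs with h | rfl | h
    exacts [h, le_rfl, absurd (htop t ht) (not_le.2 h.1)]
  push Not at htop
  obtain ⟨β, hβ, hcβ⟩ := hbdd
  set γ := sSup (level '' c)
  have hL : BddAbove (level '' c) := ⟨β, forall_mem_image.2 hcβ⟩
  have hγ : γ < δ := (csSup_le (hne.image _) (forall_mem_image.2 hcβ)).trans_lt hβ
  have hlevel : ∀ s ∈ c, s.level ≤ γ := fun s hs => le_csSup hL (mem_image_of_mem _ hs)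
  have hA : cd '' seq γ = ⋃ s : c, cd '' seq s.1.level := by
    refine (image_subset_iff.2 fun g hg => ?_).antisymm
      (iUnion_subset fun s => image_mono (hp.mono _ _ (hlevel s.1 s.2) hγ))
    obtain ⟨_, ⟨s, hs, rfl⟩, hgs⟩ := mem_iUnion₂.1 (hp.seq_csSup_subset (hne.image _) hL hγ hg)
    exact mem_iUnion.2 ⟨⟨s, hs⟩, g, hgs, rfl⟩
  refine ⟨⟨γ, ⋃ s : c, s.1.sets, hγ, hA ▸ isUltrafilterIn_iUnion hc hne, ?_⟩,
    fun s hs => .inr ⟨?_, fun X hX => mem_iUnion.2 ⟨⟨s, hs⟩, hX⟩, fun Z hZ => ?_⟩⟩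
  · simp only [mem_iUnion]
    rintro X ⟨s, hX⟩
    exact s.1.unbAbove_mx X hX
  · obtain ⟨t, ht, hst⟩ := htop s hs
    exact hst.trans_le (hlevel t ht)
  · obtain ⟨t, ht, hst⟩ := htop s hs
    obtain ⟨P, hP, hPZ⟩ := (refines_of_mem_chain hc hs ht hst).2.2 Z hZ
    exact ⟨P, mem_iUnion.2 ⟨⟨t, ht⟩, hP⟩, hPZ⟩

theorem exists_cofinal_isChain (hq : Function.Bijective q) (hid : ∀ X : Set ℚ, cd (dcd X) = X)
    (hp : IsPathway evDomLE (GruffOps q cd dcd) δ seq) (hδ : Order.IsSuccLimit δ) :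
    ∃ c : Set (Stage cd seq δ), IsChain (· ≤ ·) c ∧ ∀ β < δ, ∃ s ∈ c, β < s.level := by
  by_contra! hbdd
  have := nonempty hid hp
  obtain ⟨m, hm⟩ := zorn_le fun c hc => c.eq_empty_or_nonempty.elim
    (fun h => h ▸ bddAbove_empty) fun hne => bddAbove_of_isChain hp hc hne (hbdd c hc)
  obtain ⟨t, hmt⟩ := exists_refines hq hid hp hδ m
  exact (level_le_of_le (hm (.inr hmt))).not_gt hmt.1

theorem exists_gruff_of_cofinal (hid : ∀ X : Set ℚ, cd (dcd X) = X)
    (hp : IsPathway evDomLE (GruffOps q cd dcd) δ seq) {c : Set (Stage cd seq δ)}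
    (hc : IsChain (· ≤ ·) c) (hcof : ∀ β < δ, ∃ s ∈ c, β < s.level) :
    ∃ u : Ultrafilter ℚ, ∀ A ∈ u, ∃ P ∈ u, P ⊆ A ∧ IsClosed P ∧ Crowded P := by
  obtain ⟨β, hβ, -⟩ := hp.exists_mem id
  obtain ⟨s₀, hs₀, -⟩ := hcof β hβ
  have hall : ⋃ s : c, cd '' seq s.1.level = Set.univ := eq_univ_of_forall fun Y => by
    obtain ⟨α, hα, hY⟩ := hp.exists_mem (dcd Y)
    obtain ⟨s, hs, hαs⟩ := hcof α hα
    exact mem_iUnion.2 ⟨⟨s, hs⟩, dcd Y, hp.mono α s.level hαs.le s.level_lt hY, hid Y⟩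
  have hU := isUltrafilterIn_iUnion hc ⟨s₀, hs₀⟩
  rw [hall] at hU
  refine ⟨hU.toUltrafilter, fun A hA => ?_⟩
  obtain ⟨⟨s, hs⟩, hAs⟩ := mem_iUnion.1 (hU.mem_toUltrafilter.1 hA)
  obtain ⟨t, ht, hst⟩ := hcof s.level s.level_lt
  obtain ⟨P, hP, hPA⟩ := (refines_of_mem_chain hc hs ht hst).2.2 A hAs
  exact ⟨P, hU.mem_toUltrafilter.2 (mem_iUnion.2 ⟨⟨t, ht⟩, hP⟩), hPA⟩

end Stage

theorem stmt12_general (q : ℕ → ℚ) (hq : Function.Bijective q)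
    (cd : (ℕ → ℕ) → Set ℚ) (dcd : Set ℚ → (ℕ → ℕ))
    (hid : ∀ X : Set ℚ, cd (dcd X) = X)
    (κ : Cardinal)
    (seq : Ordinal → Set (ℕ → ℕ))
    (hpath : IsPathway evDomLE (GruffOps q cd dcd) κ.ord seq) :
    ∃ u : Ultrafilter ℚ, ∀ A ∈ u, ∃ P ∈ u, P ⊆ A ∧ IsClosed P ∧ Crowded P := by
  have hδ := hpath.isSuccLimit fun f => ⟨f, .of_forall fun _ => le_rfl⟩
  obtain ⟨c, hc, hcof⟩ := Stage.exists_cofinal_isChain hq hid hpath hδ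
  exact Stage.exists_gruff_of_cofinal hid hpath hc hcof

/-- if `cd : ω^ω → 𝔓(ℚ)` and `dcd : 𝔓(ℚ) → ω^ω` satisfy `cd ∘ dcd = id`,
`κ` is regular, and there exists a `⟨𝔡, ℱ_{gruff}, κ⟩`-pathway, then there exists a gruff
ultrafilter: an ultrafilter on `ℚ` every element of which contains a perfect member. -/
theorem stmt12 (q : ℕ → ℚ) (hq : Function.Bijective q)
    (cd : (ℕ → ℕ) → Set ℚ) (dcd : Set ℚ → (ℕ → ℕ))
    (hid : ∀ X : Set ℚ, cd (dcd X) = X)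
    (κ : Cardinal) (hκ : κ.IsRegular)
    (seq : Ordinal → Set (ℕ → ℕ))
    (hpath : IsPathway evDomLE (GruffOps q cd dcd) κ.ord seq) :
    ∃ u : Ultrafilter ℚ, ∀ A ∈ u, ∃ P ∈ u, P ⊆ A ∧ IsClosed P ∧ Crowded P :=
  stmt12_general q hq cd dcd hid κ seq hpath
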